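/- arXiv:2203.14439 — 3 statements merged into one kernel-verified Lean document; each statement's English description precedes it below -/
import Mathlib

section
/- Let $R$ be a commutative $\mathbb{Q}$-algebra, $l \mid n$, and $x, a \in R$. For $1 \leq k \leq n$ define $c^{l,a}_k = \sigma_k(x_1 - a/l, \ldots, x_n - a/l)$ where $x_1,\ldots,x_n \in R$. Setting $b = a + x$, the classes satisfy the change-of-trivialization formula $c^{l,b}_k = \sum_{i=0}^{k} (-1/l)^i \binom{n-k+i}{i} x^i \, c^{l,a}_{k-i}$. -/
/-! Shifting every `y` by `t` turns `∏ (X + y)` into its composition with `X + t`; comparing the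
coefficients of `X^(n-k)` after expanding by Vieta and the binomial theorem gives the formula. -/

open Polynomial Finset

theorem Multiset.prod_X_add_C_map_add_const {R : Type*} [CommRing R] (s : Multiset R) (t : R) :
    (s.map fun y => X + C (y + t)).prod = (s.map fun y => X + C y).prod.comp (X + C t) := by
  rw [multiset_prod_comp, Multiset.map_map]
  congr 1
  refine Multiset.map_congr rfl fun y _ => ?_
  simp only [Function.comp_apply, add_comp, X_comp, C_comp, C_add]
  ring

theorem Multiset.esymm_map_add_const {R : Type*} [CommRing R] (s : Multiset R) (t : R) {k : ℕ}
    (hk : k ≤ Multiset.card s) :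
    (s.map (· + t)).esymm k
      = ∑ i ∈ Finset.range (k + 1),
          t ^ i * ((Multiset.card s - k + i).choose i : R) * s.esymm (k - i) := by
  set n := Multiset.card s
  have hcoeff := prod_X_add_C_coeff' s (· + t) (k := n - k) (by omega)
  rw [Nat.sub_sub_self hk, s.prod_X_add_C_map_add_const, prod_X_add_C_eq_sum_esymm,
    Polynomial.sum_comp, finsetSum_coeff] at hcoeff
  simp only [mul_comp, C_comp, X_pow_comp, coeff_C_mul, coeff_X_add_C_pow] at hcoeff
  rw [← hcoeff, ← sum_subset (range_subset_range.mpr (by omega : k + 1 ≤ n + 1)),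
    ← sum_range_reflect]
  · refine sum_congr rfl fun i hi => ?_
    have hi : i ≤ k := Nat.lt_succ_iff.mp (Finset.mem_range.mp hi)
    rw [show k + 1 - 1 - i = k - i by omega, show n - (k - i) - (n - k) = i by omega,
      show n - (k - i) = n - k + i by omega, Nat.choose_symm_add]
    ring
  · intro j hjn hj
    rw [Finset.mem_range] at hjn hj
    rw [Nat.choose_eq_zero_of_lt (by omega), Nat.cast_zero, mul_zero, mul_zero]

theorem stmt_3_general {R : Type*} [CommRing R] [Algebra ℚ R] (l n : ℕ)
    (r : Fin n → R) (a x : R) (k : ℕ) (hkn : k ≤ n) :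
    (Finset.univ.val.map (fun i => r i - algebraMap ℚ R (1 / l) * (a + x))).esymm k
      = ∑ i ∈ Finset.range (k + 1),
          algebraMap ℚ R ((-1 / l) ^ i * ((n - k + i).choose i : ℚ)) * x ^ i
            * (Finset.univ.val.map (fun j => r j - algebraMap ℚ R (1 / l) * a)).esymm (k - i) := by
  set c := algebraMap ℚ R (1 / l)
  set s := Finset.univ.val.map fun j => r j - c * a
  have hcard : Multiset.card s = n := by simp [s]
  have hshift : Finset.univ.val.map (fun i => r i - c * (a + x)) = s.map (· + -(c * x)) := by
    rw [Multiset.map_map]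
    exact Multiset.map_congr rfl fun i _ => by simp only [Function.comp_apply]; ring
  rw [hshift, s.esymm_map_add_const _ (hcard ▸ hkn), hcard]
  refine sum_congr rfl fun i _ => ?_
  rw [map_mul, map_pow, map_natCast, neg_div, map_neg]
  ring

/-- Let `R` be a commutative `ℚ`-algebra, `l ∣ n` (`l > 0`), and `x, a ∈ R`.
For `1 ≤ k ≤ n` define `c^{l,a}_k = σ_k (r 1 - a/l, …, r n - a/l)` for elements
`r 1, …, r n ∈ R` (the fractional Chern classes with trivialization `a`).  Setting
`b = a + x`, the classes satisfy the change-of-trivialization formula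
`c^{l,b}_k = ∑_{i=0}^{k} (-1/l)^i (n-k+i choose i) x^i c^{l,a}_{k-i}`
(note `c^{l,a}_0 = σ_0 = 1`). -/
theorem stmt_3 {R : Type*} [CommRing R] [Algebra ℚ R] (l n : ℕ) (hl : 0 < l)
    (hln : l ∣ n) (r : Fin n → R) (a x : R) (k : ℕ) (hk : 1 ≤ k) (hkn : k ≤ n) :
    (Finset.univ.val.map (fun i => r i - algebraMap ℚ R (1 / l) * (a + x))).esymm k
      = ∑ i ∈ Finset.range (k + 1),
          algebraMap ℚ R ((-1 / l) ^ i * ((n - k + i).choose i : ℚ)) * x ^ i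
            * (Finset.univ.val.map (fun j => r j - algebraMap ℚ R (1 / l) * a)).esymm (k - i) :=
  stmt_3_general l n r a x k hkn
end

section
/- Let $R$ be a commutative $\mathbb{Q}$-algebra, $l \mid n$ with $s = n/l$, and $g, \bar{c}_1, c_2, \ldots, c_n \in R$. Define $\phi^*_k = \sum_{i=0}^{k} (-1/l)^i \binom{n-k+i}{i} g^i c_{k-i}$ with $c_0 = 1$ and $c_1 = s\bar{c}_1$. After substituting $g = \bar{c}_1$, one has $\phi^*_k = \sum_{i=0}^{k-2} (-1/l)^i \binom{n-k+i}{i} \bar{c}_1^i c_{k-i} + (-1/l)^k (1-k)\binom{n}{k} \bar{c}_1^k$. -/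
/-!
Only the two top terms of `φ*_k` involve `c₀` or `c₁`. After `g = c̄₁` and `c₁ = s c̄₁` they
combine to `(-1/l)^k (C(n,k) - l s C(n-1,k-1)) c̄₁^k`, and
`l s C(n-1,k-1) = n C(n-1,k-1) = k C(n,k)`.
-/

theorem Nat.mul_choose_sub_one_eq (n j : ℕ) :
    n * (n - 1).choose j = n.choose (j + 1) * (j + 1) := by
  cases n with
  | zero => simp
  | succ n => exact Nat.add_one_mul_choose_eq n j

theorem top_coeffs_add_eq {K : Type*} [Field K] (l s n j : ℕ) (hl : (l : K) ≠ 0)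
    (hn : n = l * s) :
    (-1 / l : K) ^ j * ((n - 1).choose j : K) * s + (-1 / l) ^ (j + 1) * (n.choose (j + 1) : K)
      = (-1 / l) ^ (j + 1) * (1 - ((j + 1 : ℕ) : K)) * (n.choose (j + 1) : K) := by
  have hls : (l : K) * s = n := by rw [hn, Nat.cast_mul]
  have hchoose : (n : K) * (n - 1).choose j = n.choose (j + 1) * (j + 1) := by
    exact_mod_cast congrArg (Nat.cast : ℕ → K) (Nat.mul_choose_sub_one_eq n j)
  have hinv : (-1 / l : K) * l = -1 := by field_simp
  push_cast
  linear_combination (-1 / l : K) ^ j * ((n - 1).choose j : K) * s * hinv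
    - (-1 / l : K) ^ (j + 1) * ((n - 1).choose j : K) * hls - (-1 / l : K) ^ (j + 1) * hchoose

/-- Let `R` be a commutative `ℚ`-algebra, `n = l * s` with `l > 0`, and
`g, c̄₁, c₂, …, c_n ∈ R`.  Define `φ*_k = ∑_{i=0}^{k} (-1/l)^i (n-k+i choose i) g^i c_{k-i}`
with `c 0 = 1` and `c 1 = s c̄₁`.  After substituting `g = c̄₁`, one has
`φ*_k = ∑_{i=0}^{k-2} (-1/l)^i (n-k+i choose i) c̄₁^i c_{k-i}
          + (-1/l)^k (1-k) (n choose k) c̄₁^k`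
(the range `Finset.range (k-1)` is `{0, …, k-2}`). -/
theorem stmt_5 {R : Type*} [CommRing R] [Algebra ℚ R] (l s n : ℕ) (hl : 0 < l)
    (hn : n = l * s) (cbar₁ : R) (c : ℕ → R) (hc0 : c 0 = 1) (hc1 : c 1 = (s : R) * cbar₁)
    (k : ℕ) (hk : 2 ≤ k) (hkn : k ≤ n) :
    ∑ i ∈ Finset.range (k + 1),
        algebraMap ℚ R ((-1 / l) ^ i * ((n - k + i).choose i : ℚ)) * cbar₁ ^ i * c (k - i)
      = (∑ i ∈ Finset.range (k - 1),
            algebraMap ℚ R ((-1 / l) ^ i * ((n - k + i).choose i : ℚ)) * cbar₁ ^ i * c (k - i))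
        + algebraMap ℚ R ((-1 / l) ^ k * (1 - (k : ℚ)) * (n.choose k : ℚ)) * cbar₁ ^ k := by
  obtain ⟨j, rfl⟩ : ∃ j, k = j + 1 := ⟨k - 1, by omega⟩
  rw [Nat.add_sub_cancel, Finset.sum_range_succ, Finset.sum_range_succ, add_assoc,
    show j + 1 - j = 1 by omega, Nat.sub_self, show n - (j + 1) + j = n - 1 by omega,
    Nat.sub_add_cancel hkn, hc0, hc1]
  congr 1
  have key := congrArg (algebraMap ℚ R) (top_coeffs_add_eq l s n j (by positivity) hn)
  simp only [map_add, map_mul, map_natCast] at key ⊢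
  linear_combination cbar₁ ^ (j + 1) * key
end

section
/- The map $(d_l, \rho_s): U(n)_l \to U(1) \times U(n)$ together with $\mu_s: U(1)\times U(n) \to U(1)$, $\mu_s(z, A) = z^{-s}\det(A)$, forms an exact sequence of groups $1 \to U(n)_l \xrightarrow{(d_l,\rho_s)} U(1)\times U(n) \xrightarrow{\mu_s} U(1) \to 1$; equivalently, $U(n)_l$ is the pullback of $\tau_s: U(1)\to U(1)$, $z \mapsto z^s$, along $\det: U(n) \to U(1)$. -/
open Matrix CategoryTheory

noncomputable section

universe u

/-- `SU n` : the special unitary group `SU(n)`, as a subgroup of the unitary group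
`U(n) = Matrix.unitaryGroup (Fin n) ℂ`. -/
def SU (n : ℕ) : Subgroup (Matrix.unitaryGroup (Fin n) ℂ) where
  carrier := {A | ((A : Matrix.unitaryGroup (Fin n) ℂ) : Matrix (Fin n) (Fin n) ℂ).det = 1}
  one_mem' := by simp
  mul_mem' := by
    intro A B hA hB
    simp only [Set.mem_setOf_eq] at *
    rw [Matrix.UnitaryGroup.mul_val, Matrix.det_mul, hA, hB, one_mul]
  inv_mem' := by
    intro A hA
    simp only [Set.mem_setOf_eq] at *
    rw [Matrix.UnitaryGroup.inv_val, Matrix.star_eq_conjTranspose, Matrix.det_conjTranspose, hA]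
    simp

/-- The diagonal central `ℤ/l` in `U(1) × SU(n)`: the subgroup generated by the pairs
`(ζ, ζ⁻¹ · 1)` with `ζ` an `l`-th root of unity. -/
def diagZ (l n : ℕ) : Subgroup (Circle × SU n) :=
  Subgroup.closure
    {p | (p.1 : ℂ) ^ l = 1 ∧
      ((p.2 : Matrix.unitaryGroup (Fin n) ℂ) : Matrix (Fin n) (Fin n) ℂ)
        = ((p.1 : ℂ))⁻¹ • (1 : Matrix (Fin n) (Fin n) ℂ)}

/-- The diagonal `ℤ/l` is central, hence normal. -/
instance diagZ_normal (l n : ℕ) : (diagZ l n).Normal := by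
  have hle : diagZ l n ≤ Subgroup.center (Circle × SU n) := by
    rw [diagZ, Subgroup.closure_le]
    rintro ⟨z, A⟩ ⟨hz, hA⟩
    rw [SetLike.mem_coe, Subgroup.mem_center_iff]
    rintro ⟨w, B⟩
    have h1 : w * z = z * w := mul_comm _ _
    have h2 : B * A = A * B := by
      apply Subtype.ext
      apply Subtype.ext
      show ((B : Matrix.unitaryGroup (Fin n) ℂ) : Matrix (Fin n) (Fin n) ℂ) *
          ((A : Matrix.unitaryGroup (Fin n) ℂ) : Matrix (Fin n) (Fin n) ℂ)
        = ((A : Matrix.unitaryGroup (Fin n) ℂ) : Matrix (Fin n) (Fin n) ℂ) *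
          ((B : Matrix.unitaryGroup (Fin n) ℂ) : Matrix (Fin n) (Fin n) ℂ)
      rw [hA, Matrix.smul_mul, Matrix.mul_smul, Matrix.one_mul, Matrix.mul_one]
    exact Prod.ext h1 h2
  constructor
  intro p hp g
  have hc := Subgroup.mem_center_iff.mp (hle hp) g
  have : g * p * g⁻¹ = p := by
    rw [hc, mul_assoc, mul_inv_cancel, mul_one]
  rwa [this]

/-- `Unl l n` : the group `U(n)_l = U(1) ×_{ℤ/l} SU(n)`, the quotient of `U(1) × SU(n)`
by the diagonal central `ℤ/l`. -/
def Unl (l n : ℕ) : Type :=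
  (Circle × SU n) ⧸ diagZ l n

instance (l n : ℕ) : Group (Unl l n) := QuotientGroup.Quotient.group _

instance (l n : ℕ) : TopologicalSpace (Unl l n) := instTopologicalSpaceQuotient


/-!
Because `U(1) × SU(n) → U(n)_l` is onto, `φ` is the map `(z, A) ↦ (z ^ l, z • A)` read on
representatives, and the kernel of that map is exactly the diagonal `ℤ/l`; so `φ` is injective.
Its image lies in the pullback since `det (z • A) = z ^ n = (z ^ l) ^ s`. Conversely, if
`det A = u ^ s`, choose an `l`-th root `w` of `u`: then `w⁻¹ • A ∈ SU(n)` and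
`(w, w⁻¹ • A) ↦ (u, A)`. The pullback is the kernel of `μ_s`, and `μ_s` is onto because
`μ_s (w, 1) = w ^ (-s)` and every element of `U(1)` has an `s`-th root.
-/

theorem Circle.exists_pow_eq {k : ℕ} (hk : k ≠ 0) (u : Circle) : ∃ w : Circle, w ^ k = u := by
  obtain ⟨w, hw⟩ := IsAlgClosed.exists_pow_nat_eq (u : ℂ) (Nat.pos_of_ne_zero hk)
  have hnorm : ‖w‖ = 1 := by
    rw [← pow_left_inj₀ (norm_nonneg w) zero_le_one hk, ← norm_pow, hw, Circle.norm_coe,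
      one_pow]
  exact ⟨⟨w, mem_sphere_zero_iff_norm.2 hnorm⟩, Circle.ext hw⟩

theorem Circle.coe_mem_unitary (z : Circle) : (z : ℂ) ∈ unitary ℂ := by
  rw [Unitary.mem_iff_star_mul_self, Complex.star_def, Complex.conj_mul', Circle.norm_coe]
  norm_num

/-- The map `(d_l, ρ_s)` on representatives `(z, A)` of classes `[z, A] ∈ U(n)_l`. -/
def dRho (l n : ℕ) : Circle × SU n →* Circle × unitaryGroup (Fin n) ℂ where
  toFun p := (p.1 ^ l, ⟨(p.1 : ℂ) • (p.2 : Matrix (Fin n) (Fin n) ℂ),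
    Unitary.smul_mem_of_mem p.1.coe_mem_unitary (p.2 : unitaryGroup (Fin n) ℂ).2⟩)
  map_one' := by ext <;> simp
  map_mul' p q := by
    ext i j
    · simp [mul_pow]
    · simp only [Prod.fst_mul, Prod.snd_mul, Circle.coe_mul, Subgroup.coe_mul,
        UnitaryGroup.mul_val, smul_mul_smul_comm]

theorem dRho_fst {l n : ℕ} (p : Circle × SU n) : (dRho l n p).1 = p.1 ^ l := rfl

theorem coe_dRho_snd {l n : ℕ} (p : Circle × SU n) :
    ((dRho l n p).2 : Matrix (Fin n) (Fin n) ℂ) =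
      (p.1 : ℂ) • (p.2 : Matrix (Fin n) (Fin n) ℂ) :=
  rfl

theorem ker_dRho (l n : ℕ) : (dRho l n).ker = diagZ l n := by
  apply le_antisymm
  · intro p hp
    have hz : (dRho l n p).1 = 1 := congrArg Prod.fst hp
    have hA : ((dRho l n p).2 : Matrix (Fin n) (Fin n) ℂ) = 1 :=
      congrArg (fun q => ((q.2 : unitaryGroup (Fin n) ℂ) : Matrix (Fin n) (Fin n) ℂ)) hp
    refine Subgroup.subset_closure ⟨?_, ?_⟩
    · rw [← Circle.coe_pow, ← dRho_fst, hz, Circle.coe_one]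
    · rw [← hA, coe_dRho_snd, smul_smul, inv_mul_cancel₀ p.1.coe_ne_zero, one_smul]
  · rw [diagZ, Subgroup.closure_le]
    rintro p ⟨hz, hA⟩
    refine Prod.ext (Circle.ext ?_) (Subtype.ext ?_)
    · rw [dRho_fst, Circle.coe_pow, hz]; rfl
    · rw [coe_dRho_snd, hA, smul_smul, mul_inv_cancel₀ p.1.coe_ne_zero, one_smul]; rfl

theorem mem_range_dRho_iff {l s n : ℕ} (hl : 0 < l) (hn : n = l * s)
    (q : Circle × unitaryGroup (Fin n) ℂ) :
    q ∈ (dRho l n).range ↔ (q.2 : Matrix (Fin n) (Fin n) ℂ).det = (q.1 : ℂ) ^ s := by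
  subst hn
  constructor
  · rintro ⟨p, rfl⟩
    rw [coe_dRho_snd, det_smul, p.2.2, Fintype.card_fin, dRho_fst, Circle.coe_pow, mul_one,
      pow_mul]
  · rcases q with ⟨z, A⟩
    intro hdet
    obtain ⟨w, rfl⟩ := Circle.exists_pow_eq hl.ne' z
    have hB : det (((w⁻¹ : Circle) : ℂ) • A.1) = 1 := by
      rw [det_smul, hdet, Fintype.card_fin, Circle.coe_pow, ← pow_mul, ← mul_pow,
        Circle.coe_inv, inv_mul_cancel₀ w.coe_ne_zero, one_pow]
    let B : SU (l * s) := ⟨⟨_, Unitary.smul_mem_of_mem w⁻¹.coe_mem_unitary A.2⟩, hB⟩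
    refine ⟨(w, B), Prod.ext rfl (Subtype.ext ?_)⟩
    rw [coe_dRho_snd]
    show (w : ℂ) • ((w⁻¹ : Circle) : ℂ) • A.1 = A
    rw [smul_smul, Circle.coe_inv, mul_inv_cancel₀ w.coe_ne_zero, one_smul]

theorem QuotientGroup.injective_of_ker_comp_mk'_le {G H : Type*} [Group G] [Group H]
    {N : Subgroup G} [N.Normal] (φ : G ⧸ N →* H) (h : (φ.comp (mk' N)).ker ≤ N) :
    Function.Injective φ := by
  rw [injective_iff_map_eq_one]
  rintro ⟨g⟩ hg
  exact (eq_one_iff g).2 (h hg)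

theorem QuotientGroup.range_comp_mk' {G H : Type*} [Group G] [Group H]
    {N : Subgroup G} [N.Normal]
    (φ : G ⧸ N →* H) : (φ.comp (mk' N)).range = φ.range := by
  rw [MonoidHom.range_comp, range_mk', ← MonoidHom.range_eq_map]

theorem comp_mk'_eq_dRho {l n : ℕ} (φ : Unl l n →* Circle × unitaryGroup (Fin n) ℂ)
    (hφ₁ : ∀ p : Circle × SU n, (φ (QuotientGroup.mk p)).1 = p.1 ^ l)
    (hφ₂ : ∀ p : Circle × SU n,
      (((φ (QuotientGroup.mk p)).2 : unitaryGroup (Fin n) ℂ) : Matrix (Fin n) (Fin n) ℂ)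
        = (p.1 : ℂ) • ((p.2 : unitaryGroup (Fin n) ℂ) : Matrix (Fin n) (Fin n) ℂ)) :
    φ.comp (QuotientGroup.mk' (diagZ l n)) = dRho l n :=
  MonoidHom.ext fun p => Prod.ext (hφ₁ p) (Subtype.ext (hφ₂ p))

section
variable {ι : Type*} [Fintype ι] [DecidableEq ι] {s : ℕ}
  {μ : Circle × unitaryGroup ι ℂ →* Circle}

theorem mem_ker_iff_det_eq_pow
    (hμ : ∀ q : Circle × unitaryGroup ι ℂ,
      (μ q : ℂ) = (q.1 : ℂ)⁻¹ ^ s * (q.2 : Matrix ι ι ℂ).det)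
    (q : Circle × unitaryGroup ι ℂ) :
    q ∈ μ.ker ↔ (q.2 : Matrix ι ι ℂ).det = (q.1 : ℂ) ^ s := by
  rw [MonoidHom.mem_ker, ← Circle.coe_eq_one, hμ, inv_pow,
    inv_mul_eq_one₀ (pow_ne_zero _ q.1.coe_ne_zero), eq_comm]

theorem surjective_of_eq_inv_pow_mul_det (hs : 0 < s)
    (hμ : ∀ q : Circle × unitaryGroup ι ℂ,
      (μ q : ℂ) = (q.1 : ℂ)⁻¹ ^ s * (q.2 : Matrix ι ι ℂ).det) :
    Function.Surjective μ := by
  intro u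
  obtain ⟨w, hw⟩ := Circle.exists_pow_eq hs.ne' u⁻¹
  refine ⟨(w, 1), Circle.ext ?_⟩
  rw [hμ, inv_pow, ← Circle.coe_pow, hw, UnitaryGroup.one_val, det_one, mul_one, Circle.coe_inv,
    inv_inv]

end

/-- With `n = l s` and `U(n)_l = U(1) ×_{ℤ/l} SU(n)`, the map
`(d_l, ρ_s) : U(n)_l → U(1) × U(n)` together with `μ_s : U(1) × U(n) → U(1)`,
`μ_s(z, A) = z^{-s} det A`, forms an exact sequence of groups
`1 → U(n)_l → U(1) × U(n) → U(1) → 1`; equivalently, `U(n)_l` is the pullback of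
`τ_s : U(1) → U(1)`, `z ↦ z^s`, along `det : U(n) → U(1)` (its image in `U(1) × U(n)`
consists exactly of the pairs `(z, A)` with `det A = z^s`). -/
theorem stmt_16 (l s n : ℕ) (hl : 0 < l) (hs : 0 < s) (hn : n = l * s)
    (φ : Unl l n →* Circle × Matrix.unitaryGroup (Fin n) ℂ)
    -- `φ = (d_l, ρ_s)` : on a class `[z, A]`, the first component is `z^l` …
    (hφ₁ : ∀ p : Circle × SU n, (φ (QuotientGroup.mk p)).1 = p.1 ^ l)
    -- … and the second component is the unitary matrix `z • A`.
    (hφ₂ : ∀ p : Circle × SU n,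
      (((φ (QuotientGroup.mk p)).2 : Matrix.unitaryGroup (Fin n) ℂ)
          : Matrix (Fin n) (Fin n) ℂ)
        = ((p.1 : ℂ)) • ((p.2 : Matrix.unitaryGroup (Fin n) ℂ)
          : Matrix (Fin n) (Fin n) ℂ))
    (μs : Circle × Matrix.unitaryGroup (Fin n) ℂ →* Circle)
    -- `μ_s (z, A) = z^{-s} · det A`
    (hμ : ∀ q : Circle × Matrix.unitaryGroup (Fin n) ℂ,
      ((μs q : ℂ)) = ((q.1 : ℂ))⁻¹ ^ s * ((q.2 : Matrix (Fin n) (Fin n) ℂ)).det) :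
    -- exactness of `1 → U(n)_l → U(1) × U(n) → U(1) → 1`
    Function.Injective φ
      ∧ φ.range = μs.ker
      ∧ Function.Surjective μs
      -- the pullback description of the image
      ∧ (∀ q : Circle × Matrix.unitaryGroup (Fin n) ℂ,
          q ∈ φ.range ↔ ((q.2 : Matrix (Fin n) (Fin n) ℂ)).det = ((q.1 : ℂ)) ^ s) := by
  have hcomp := comp_mk'_eq_dRho φ hφ₁ hφ₂
  have hrange : φ.range = (dRho l n).range :=
    (QuotientGroup.range_comp_mk' φ).symm.trans (congrArg MonoidHom.range hcomp)
  have hpullback (q : Circle × unitaryGroup (Fin n) ℂ) :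
      q ∈ φ.range ↔ (q.2 : Matrix (Fin n) (Fin n) ℂ).det = (q.1 : ℂ) ^ s := by
    rw [hrange, mem_range_dRho_iff hl hn]
  refine ⟨QuotientGroup.injective_of_ker_comp_mk'_le φ (hcomp ▸ (ker_dRho l n).le), ?_,
    surjective_of_eq_inv_pow_mul_det hs hμ, hpullback⟩
  ext q
  rw [hpullback, mem_ker_iff_det_eq_pow hμ]

end
end
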